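/- Let d > m ≥ 1 be integers, t, c ∈ ℂ \ {0}, and Q(z) = t·z^d + c·z^m. Then the direction θ = 0 (the positive real ray) is a good ray for Q if and only if (Arg t, Arg c) ∈ H, where Arg denotes the principal argument with values in (−π, π] and H = {(x,y) ∈ ℝ² : |x| < π, |y| < π, |y − x| < π} is the open hexagon. -/

import Mathlib

open Complex

/-- The direction `θ` (i.e. the ray `L(θ) = {r e^{iθ} : r > 0}`) is a *good ray* for the
binomial `Q(z) = t z^d + c z^m`:
(i) `L(θ)` is not a Stokes line of `t z^d dz²`;
(ii) `L(θ)` is not a Stokes line of `c z^m dz²`;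
(iii) `L(θ)` contains no turning point of `Q`;
(iv) `L(θ)` is not tangent to any vertical trajectory of `Q(z)dz²`. -/
def GoodRay (d m : ℕ) (t c : ℂ) (θ : ℝ) : Prop :=
  (¬ ∃ x : ℝ, x < 0 ∧ t * Complex.exp ((((d : ℝ) + 2) * θ : ℂ) * Complex.I) = (x : ℂ)) ∧
  (¬ ∃ x : ℝ, x < 0 ∧ c * Complex.exp ((((m : ℝ) + 2) * θ : ℂ) * Complex.I) = (x : ℂ)) ∧
  (∀ r : ℝ, 0 < r →
    t * ((r : ℂ) * Complex.exp ((θ : ℂ) * Complex.I)) ^ d +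
      c * ((r : ℂ) * Complex.exp ((θ : ℂ) * Complex.I)) ^ m ≠ 0) ∧
  (∀ r : ℝ, 0 < r → ¬ ∃ x : ℝ, x ≤ 0 ∧
    ((r : ℂ) * Complex.exp ((θ : ℂ) * Complex.I)) ^ 2 *
      (t * ((r : ℂ) * Complex.exp ((θ : ℂ) * Complex.I)) ^ d +
       c * ((r : ℂ) * Complex.exp ((θ : ℂ) * Complex.I)) ^ m) = (x : ℂ))

/-!
At `θ = 0`, conditions (i) and (ii) say that neither `t` nor `c` is a negative real, i.e.
`|Arg t| < π` and `|Arg c| < π`, and (iii) follows from (iv). Since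
`r² Q(r) = r^(m+2) (t r^(d-m) + c)` and `r ↦ r^(d-m)` is a bijection of `(0, ∞)`, condition
(iv) says that the open ray `{t s + c : s > 0}` misses `(-∞, 0]`. After conjugating we may
take `Im t ≤ 0`. If `Im t = 0` the ray meets the real axis only inside `(0, ∞)`. If `Im t < 0`
it meets the real axis only when `Im c > 0`, at the point `x` with
`x · (-Im t) = Im (conj t · c) = |t| |c| sin (Arg c - Arg t)`, which is `≤ 0` exactly when
`Arg c - Arg t ≥ π`.
-/

open scoped ComplexOrder ComplexConjugate Real

namespace Complex

lemma exists_ofReal_eq_iff {p : ℝ → Prop} {z : ℂ} :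
    (∃ x : ℝ, p x ∧ z = x) ↔ p z.re ∧ z.im = 0 := by
  constructor
  · rintro ⟨x, hx, rfl⟩
    simpa using hx
  · rintro ⟨hre, him⟩
    exact ⟨z.re, hre, ext rfl him⟩

lemma abs_arg_lt_pi_iff {z : ℂ} : |arg z| < π ↔ arg z ≠ π := by
  rw [abs_lt, ← (arg_le_pi z).lt_iff_ne]
  exact and_iff_right (neg_pi_lt_arg z)

lemma norm_mul_norm_mul_sin_arg_sub (z w : ℂ) :
    ‖z‖ * ‖w‖ * Real.sin (arg w - arg z) = z.re * w.im - z.im * w.re := by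
  rw [Real.sin_sub, ← norm_mul_cos_arg z, ← norm_mul_sin_arg z, ← norm_mul_cos_arg w,
    ← norm_mul_sin_arg w]
  ring

lemma im_pos_of_arg_pos_of_arg_lt_pi {z : ℂ} (h0 : 0 < arg z) (hπ : arg z < π) : 0 < z.im := by
  have hz : z ≠ 0 := by rintro rfl; simp at h0
  rw [← norm_mul_sin_arg]
  exact mul_pos (norm_pos_iff.2 hz) (Real.sin_pos_of_pos_of_lt_pi h0 hπ)

lemma mul_ofReal_add_nonpos_iff {t c : ℂ} {s : ℝ} :
    t * s + c ≤ 0 ↔ t.re * s + c.re ≤ 0 ∧ t.im * s + c.im = 0 := by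
  simp [nonpos_iff]

variable {t c : ℂ}

lemma exists_pos_mul_add_nonpos_iff_of_im_neg (ht : t.im < 0) (hc : arg c ≠ π) :
    (∃ s : ℝ, 0 < s ∧ t * s + c ≤ 0) ↔ π ≤ arg c - arg t := by
  have hα : arg t < 0 := arg_neg_iff.2 ht
  have hα' := neg_pi_lt_arg t
  have hcross := norm_mul_norm_mul_sin_arg_sub t c
  constructor
  · rintro ⟨s, hs, hsc⟩
    obtain ⟨hre, him⟩ := mul_ofReal_add_nonpos_iff.1 hsc
    have hci : 0 < c.im := by nlinarith
    have hcross' : t.re * c.im - t.im * c.re = -t.im * (t.re * s + c.re) := by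
      linear_combination t.re * him
    by_contra! hlt
    have hsin : 0 < Real.sin (arg c - arg t) :=
      Real.sin_pos_of_pos_of_lt_pi (by linarith [arg_nonneg_iff.2 hci.le]) hlt
    have hnorm : 0 < ‖t‖ * ‖c‖ := mul_pos (norm_pos_iff.2 fun h => by simp [h] at ht)
      (norm_pos_iff.2 fun h => by simp [h] at hci)
    have hcross_pos : 0 < t.re * c.im - t.im * c.re := hcross ▸ mul_pos hnorm hsin
    have hcross_nonpos : t.re * c.im - t.im * c.re ≤ 0 := by
      rw [hcross']
      exact mul_nonpos_of_nonneg_of_nonpos (neg_nonneg.2 ht.le) hre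
    exact hcross_pos.not_ge hcross_nonpos
  · intro hle
    have ht0 : t.im ≠ 0 := ht.ne
    have hβ : arg c < π := (arg_le_pi c).lt_of_ne hc
    have hci : 0 < c.im := im_pos_of_arg_pos_of_arg_lt_pi (by linarith) hβ
    have hsin : Real.sin (arg c - arg t) ≤ 0 := by
      rw [← Real.sin_sub_two_pi]
      exact Real.sin_nonpos_of_nonpos_of_neg_pi_le (by linarith) (by linarith)
    refine ⟨-c.im / t.im, div_pos_of_neg_of_neg (by linarith) ht,
      mul_ofReal_add_nonpos_iff.2 ⟨?_, ?_⟩⟩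
    · have hre : (t.re * (-c.im / t.im) + c.re) * -t.im = t.re * c.im - t.im * c.re := by
        field_simp
        ring
      refine nonpos_of_mul_nonpos_left ?_ (neg_pos.2 ht)
      rw [hre, ← hcross]
      exact mul_nonpos_of_nonneg_of_nonpos (by positivity) hsin
    · field_simp
      ring

lemma not_exists_pos_mul_add_nonpos_of_im_eq_zero (ht : t.im = 0) (ht' : arg t ≠ π)
    (hc : arg c ≠ π) (hc0 : c ≠ 0) : ¬ ∃ s : ℝ, 0 < s ∧ t * s + c ≤ 0 := by
  rintro ⟨s, hs, hsc⟩
  obtain ⟨hre, him⟩ := mul_ofReal_add_nonpos_iff.1 hsc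
  have hci : c.im = 0 := by simpa [ht] using him
  have htr : 0 ≤ t.re := not_lt.1 fun h => ht' (arg_eq_pi_iff.2 ⟨h, ht⟩)
  have hcr : 0 ≤ c.re := not_lt.1 fun h => hc (arg_eq_pi_iff.2 ⟨h, hci⟩)
  have hcr' : c.re ≠ 0 := fun h => hc0 (ext h hci)
  nlinarith [hcr.lt_of_ne' hcr']

lemma exists_pos_mul_add_nonpos_iff (ht : arg t ≠ π) (hc : arg c ≠ π) (hc0 : c ≠ 0) :
    (∃ s : ℝ, 0 < s ∧ t * s + c ≤ 0) ↔ π ≤ |arg c - arg t| := by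
  have hα := neg_pi_lt_arg t
  have hβ := neg_pi_lt_arg c
  have hα' := (arg_le_pi t).lt_of_ne ht
  have hβ' := (arg_le_pi c).lt_of_ne hc
  rcases lt_trichotomy t.im 0 with hneg | hzero | hpos
  · rw [exists_pos_mul_add_nonpos_iff_of_im_neg hneg hc, le_abs']
    have := arg_neg_iff.2 hneg
    constructor <;> intro h <;> [right; rcases h with h | h] <;> linarith
  · refine iff_of_false (not_exists_pos_mul_add_nonpos_of_im_eq_zero hzero ht hc hc0) ?_
    have hα0 : arg t = 0 :=
      arg_eq_zero_iff.2 ⟨not_lt.1 fun h => ht (arg_eq_pi_iff.2 ⟨h, hzero⟩), hzero⟩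
    rw [hα0, sub_zero, not_le, abs_arg_lt_pi_iff]
    exact hc
  · have key := exists_pos_mul_add_nonpos_iff_of_im_neg (t := conj t) (c := conj c)
      (by simpa using hpos) (by rw [arg_conj, if_neg hc]; linarith)
    rw [arg_conj, arg_conj, if_neg ht, if_neg hc] at key
    simp only [mul_ofReal_add_nonpos_iff, conj_re, conj_im, neg_mul, ← neg_add, neg_eq_zero]
      at key ⊢
    rw [key, le_abs']
    have := arg_nonneg_iff.2 hpos.le
    constructor <;> intro h <;> [left; rcases h with h | h] <;> linarith

end Complex

lemma exists_pos_pow_iff {p : ℝ → Prop} {n : ℕ} (hn : n ≠ 0) :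
    (∃ r : ℝ, 0 < r ∧ p (r ^ n)) ↔ ∃ s : ℝ, 0 < s ∧ p s := by
  refine ⟨fun ⟨r, hr, h⟩ => ⟨r ^ n, pow_pos hr n, h⟩, fun ⟨s, hs, h⟩ => ?_⟩
  refine ⟨s ^ (n⁻¹ : ℝ), Real.rpow_pos_of_pos hs _, ?_⟩
  rwa [Real.rpow_inv_natCast_pow hs.le hn]

lemma exists_pos_sq_mul_binomial_nonpos_iff {d m : ℕ} (hmd : m < d) {t c : ℂ} :
    (∃ r : ℝ, 0 < r ∧ (r : ℂ) ^ 2 * (t * r ^ d + c * r ^ m) ≤ 0) ↔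
      ∃ s : ℝ, 0 < s ∧ t * s + c ≤ 0 := by
  rw [← exists_pos_pow_iff (p := fun s : ℝ => t * s + c ≤ 0) (Nat.sub_ne_zero_of_lt hmd)]
  refine exists_congr fun r => and_congr_right fun hr => ?_
  obtain ⟨k, rfl⟩ := Nat.exists_eq_add_of_le hmd.le
  have hfactor : (r : ℂ) ^ 2 * (t * r ^ (m + k) + c * r ^ m) =
      (r : ℂ) ^ (m + 2) * (t * ((r ^ (m + k - m) : ℝ) : ℂ) + c) := by
    rw [Nat.add_sub_cancel_left]
    push_cast
    ring
  have hpos : (0 : ℂ) < (r : ℂ) ^ (m + 2) := by exact_mod_cast pow_pos hr _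
  rw [hfactor]
  simpa only [mul_zero] using mul_le_mul_iff_right₀ (c := 0) hpos

lemma goodRay_zero_iff (d m : ℕ) (t c : ℂ) :
    GoodRay d m t c 0 ↔ arg t ≠ π ∧ arg c ≠ π ∧
      ¬ ∃ r : ℝ, 0 < r ∧ (r : ℂ) ^ 2 * (t * r ^ d + c * r ^ m) ≤ 0 := by
  simp only [GoodRay, ofReal_zero, mul_zero, zero_mul, exp_zero, mul_one, exists_ofReal_eq_iff,
    ← neg_iff, ← nonpos_iff, ← arg_eq_pi_iff_lt_zero, not_exists, not_and]
  refine and_congr_right fun _ => and_congr_right fun _ => and_iff_right_of_imp ?_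
  intro h r hr hQ
  exact h r hr (by simp [hQ])

theorem positive_ray_good_iff_hexagon_general
    (d m : ℕ) (hdm : m < d)
    (t c : ℂ) (hc : c ≠ 0) :
    GoodRay d m t c 0 ↔
      (|Complex.arg t| < Real.pi ∧ |Complex.arg c| < Real.pi ∧
        |Complex.arg c - Complex.arg t| < Real.pi) := by
  rw [goodRay_zero_iff, abs_arg_lt_pi_iff, abs_arg_lt_pi_iff,
    exists_pos_sq_mul_binomial_nonpos_iff hdm]
  refine and_congr_right fun ht => and_congr_right fun hc' => ?_
  rw [exists_pos_mul_add_nonpos_iff ht hc' hc, not_le]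

/-- The positive real ray is a good ray for `Q = t z^d + c z^m` if and only if
`(Arg t, Arg c)` lies in the open hexagon
`H = {(x,y) : |x| < π, |y| < π, |y − x| < π}`. -/
theorem positive_ray_good_iff_hexagon
    (d m : ℕ) (hm : 1 ≤ m) (hdm : m < d)
    (t c : ℂ) (ht : t ≠ 0) (hc : c ≠ 0) :
    GoodRay d m t c 0 ↔
      (|Complex.arg t| < Real.pi ∧ |Complex.arg c| < Real.pi ∧
        |Complex.arg c - Complex.arg t| < Real.pi) :=
  positive_ray_good_iff_hexagon_general d m hdm t c hc
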